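/- Let V be a finite-dimensional real vector space with a linear map L : V → V, and let F ⊆ V be a nonempty compact set such that L maps F onto F. Suppose V = span(c⁺) ⊕ H where L(c⁺) = c⁺, H is L-invariant, and the spectral radius of L restricted to H is strictly less than 1. Then F ⊆ span(c⁺). -/

import Mathlib

/-!
Project `F` onto `H` along the fixed line. Writing `A` for the restriction of `L` to `H`, the
projection `K` of `F` is compact and satisfies `A '' K = K`. On each generalized eigenspace of
the complexification, `T = μ + N` with `N` nilpotent, so the binomial expansion of `Tⁿ` has
finitely many terms `C(n, j) μ^(n-j) Nʲ`, each tending to `0` as `|μ| < 1`; hence `Aⁿ → 0`,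
uniformly on bounded sets because `H` is finite-dimensional. Every point of `K` lies in `Aⁿ '' K`
for all `n`, so `K = {0}`.
-/

open Filter Topology Finset TensorProduct

theorem tendsto_choose_mul_pow_sub {𝕜 : Type*} [NormedField 𝕜] [CompleteSpace 𝕜] {μ : 𝕜}
    (hμ : ‖μ‖ < 1) (j : ℕ) :
    Tendsto (fun n : ℕ => (n.choose j : 𝕜) * μ ^ (n - j)) atTop (𝓝 0) := by
  rw [← tendsto_add_atTop_iff_nat j]
  simpa using (summable_choose_mul_geometric_of_norm_lt_one j hμ).tendsto_atTop_zero

namespace Module.End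

theorem pow_apply_eq_sum_of_pow_sub_smul_apply_eq_zero {R M : Type*} [CommRing R]
    [AddCommGroup M] [Module R M] (T : Module.End R M) (μ : R) {k : ℕ} {x : M}
    (hx : ((T - μ • 1) ^ k) x = 0) {n : ℕ} (hn : k ≤ n) :
    (T ^ n) x = ∑ j ∈ range k, ((n.choose j : R) * μ ^ (n - j)) • ((T - μ • 1) ^ j) x := by
  set N := T - μ • 1
  have hcomm : Commute N (μ • 1) := (Commute.one_right N).smul_right μ
  have hbinom : (T ^ n) x = ∑ j ∈ range (n + 1), ((n.choose j : R) * μ ^ (n - j)) • (N ^ j) x := by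
    rw [← sub_add_cancel T (μ • 1), hcomm.add_pow, LinearMap.sum_apply]
    refine Finset.sum_congr rfl fun j _ => ?_
    simp [smul_pow, mul_smul, smul_comm (μ ^ (n - j)), Nat.cast_smul_eq_nsmul]
  rw [hbinom]
  refine (Finset.sum_subset (range_subset_range.mpr (by omega)) fun j _ hj => ?_).symm
  rw [← Nat.sub_add_cancel (not_lt.mp (mem_range.not.mp hj)), pow_add, Module.End.mul_apply,
      hx, map_zero, smul_zero]

variable {𝕜 W : Type*} [NormedField 𝕜] [CompleteSpace 𝕜] [AddCommGroup W] [Module 𝕜 W]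
  [TopologicalSpace W] [ContinuousAdd W] [ContinuousSMul 𝕜 W]

theorem tendsto_pow_apply_of_mem_maxGenEigenspace (T : Module.End 𝕜 W) {μ : 𝕜} (hμ : ‖μ‖ < 1)
    {x : W} (hx : x ∈ T.maxGenEigenspace μ) : Tendsto (fun n => (T ^ n) x) atTop (𝓝 0) := by
  obtain ⟨k, hk⟩ := (T.mem_maxGenEigenspace μ x).mp hx
  have hlim : Tendsto (fun n : ℕ => ∑ j ∈ range k,
      ((n.choose j : 𝕜) * μ ^ (n - j)) • ((T - μ • 1) ^ j) x) atTop (𝓝 0) := by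
    simpa using tendsto_finsetSum (range k) fun j _ =>
      (tendsto_choose_mul_pow_sub hμ j).smul_const (((T - μ • 1) ^ j) x)
  refine hlim.congr' ?_
  filter_upwards [eventually_ge_atTop k] with n hn
  exact (T.pow_apply_eq_sum_of_pow_sub_smul_apply_eq_zero μ hk hn).symm

theorem tendsto_pow_apply_of_forall_hasEigenvalue [IsAlgClosed 𝕜] [FiniteDimensional 𝕜 W]
    (T : Module.End 𝕜 W) (h : ∀ μ, T.HasEigenvalue μ → ‖μ‖ < 1) (x : W) :
    Tendsto (fun n => (T ^ n) x) atTop (𝓝 0) := by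
  have hx : x ∈ ⨆ μ, T.maxGenEigenspace μ := by simp [T.iSup_maxGenEigenspace_eq_top]
  refine Submodule.iSup_induction _ (motive := fun y => Tendsto (fun n => (T ^ n) y) atTop (𝓝 0))
    hx (fun μ y hy => ?_) (by simpa using tendsto_const_nhds) fun y z hy hz => by
      simpa using hy.add hz
  by_cases hμ : T.HasEigenvalue μ
  · exact T.tendsto_pow_apply_of_mem_maxGenEigenspace (h μ hμ) hy
  · have hbot : T.maxGenEigenspace μ = ⊥ := by
      by_contra hne
      exact hμ ((hasUnifEigenvalue_iff_hasUnifEigenvalue_one (k := ⊤) (by simp)).mp hne)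
    simpa [(Submodule.mem_bot 𝕜).mp (hbot ▸ hy)] using tendsto_const_nhds

theorem tendsto_pow_apply_of_forall_baseChange_hasEigenvalue {E : Type*}
    [NormedAddCommGroup E] [NormedSpace ℝ E] [FiniteDimensional ℝ E] (A : Module.End ℝ E)
    (h : ∀ μ : ℂ, HasEigenvalue (A.baseChange ℂ) μ → ‖μ‖ < 1) (v : E) :
    Tendsto (fun n => (A ^ n) v) atTop (𝓝 0) := by
  let e := (Module.finBasis ℂ (ℂ ⊗[ℝ] E)).equivFun
  let T := e.conjAlgEquiv ℂ (A.baseChange ℂ)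
  have hT : ∀ μ, T.HasEigenvalue μ → ‖μ‖ < 1 := fun μ hμ => h μ <| by
    rwa [hasEigenvalue_iff_mem_spectrum, AlgEquiv.spectrum_eq,
      ← hasEigenvalue_iff_mem_spectrum] at hμ
  -- `G` inverts `v ↦ e (1 ⊗ₜ v)` by taking real parts.
  let G : (Fin _ → ℂ) →ₗ[ℝ] E :=
    TensorProduct.lid ℝ E ∘ₗ Complex.reLm.rTensor E ∘ₗ (e.symm.restrictScalars ℝ).toLinearMap
  have hG : ∀ n, G ((T ^ n) (e (1 ⊗ₜ v))) = (A ^ n) v := by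
    intro n
    simp [T, G, ← map_pow, ← LinearMap.baseChange_pow]
  have := (G.continuous_of_finiteDimensional.tendsto 0).comp
    (T.tendsto_pow_apply_of_forall_hasEigenvalue hT (e (1 ⊗ₜ v)))
  simpa only [Function.comp_def, hG, map_zero] using this

end Module.End

theorem ContinuousLinearMap.tendsto_iff_forall_tendsto_apply {𝕜 E F ι : Type*}
    [NontriviallyNormedField 𝕜] [CompleteSpace 𝕜] [NormedAddCommGroup E] [NormedSpace 𝕜 E]
    [FiniteDimensional 𝕜 E] [NormedAddCommGroup F] [NormedSpace 𝕜 F] [FiniteDimensional 𝕜 F]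
    {f : ι → E →L[𝕜] F} {g : E →L[𝕜] F} {l : Filter ι} :
    Tendsto f l (𝓝 g) ↔ ∀ v, Tendsto (fun i => f i v) l (𝓝 (g v)) := by
  let coeFn : (E →L[𝕜] F) →ₗ[𝕜] E → F :=
    LinearMap.pi fun v => (ContinuousLinearMap.apply 𝕜 F v).toLinearMap
  have hinj : LinearMap.ker coeFn = ⊥ :=
    LinearMap.ker_eq_bot.mpr fun φ ψ h => ContinuousLinearMap.ext (congrFun h)
  rw [(LinearMap.isClosedEmbedding_of_injective hinj).tendsto_nhds_iff, tendsto_pi_nhds]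
  rfl

theorem Submodule.projectionOnto_apply_of_mapsTo {R E : Type*} [Ring R] [AddCommGroup E]
    [Module R E] {p q : Submodule R E} (h : IsCompl p q) {f : Module.End R E}
    (hp : ∀ x ∈ p, f x ∈ p) (hq : ∀ x ∈ q, f x ∈ q) (x : E) :
    p.projectionOnto q h (f x) = f.restrict hp (p.projectionOnto q h x) := by
  conv_lhs => rw [← projection_add_projection_eq_self h x]
  rw [map_add, map_add, projectionOnto_apply_of_mem_left h (hp _ (projection_apply_mem h x)),
    projectionOnto_apply_of_mem_right h (hq _ (projection_apply_mem h.symm x)), add_zero]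
  rfl

theorem subset_zero_of_tendsto_zero_of_subset_image {𝕜 E ι : Type*} [NontriviallyNormedField 𝕜]
    [NormedAddCommGroup E] [NormedSpace 𝕜 E] {l : Filter ι} [l.NeBot] {T : ι → E →L[𝕜] E}
    (hT : Tendsto T l (𝓝 0)) {K : Set E} (hK : Bornology.IsBounded K) (hTK : ∀ i, K ⊆ T i '' K) :
    K ⊆ {0} := by
  obtain ⟨C, hC⟩ := hK.exists_norm_le
  intro x hx
  have hbound : ∀ i, ‖x‖ ≤ ‖T i‖ * C := by
    intro i
    obtain ⟨y, hy, rfl⟩ := hTK i hx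
    exact ((T i).le_opNorm y).trans (by gcongr; exact hC y hy)
  have hlim : Tendsto (fun i => ‖T i‖ * C) l (𝓝 0) := by
    simpa using (tendsto_zero_iff_norm_tendsto_zero.mp hT).mul_const C
  exact norm_le_zero_iff.mp (ge_of_tendsto' hlim hbound)

theorem compact_invariant_set_in_fixed_line_general
    (V : Type*) [NormedAddCommGroup V] [NormedSpace ℝ V] [FiniteDimensional ℝ V]
    (L : V →ₗ[ℝ] V) (F : Set V) (hFc : IsCompact F)
    (hLF : L '' F = F)
    (cplus : V) (hfix : L cplus = cplus)
    (H : Submodule ℝ V) (hH : ∀ x ∈ H, L x ∈ H)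
    (hcompl : IsCompl (Submodule.span ℝ {cplus}) H)
    (hspec : ∀ μ : ℂ, Module.End.HasEigenvalue
      (LinearMap.baseChange ℂ (LinearMap.restrict L hH)) μ → ‖μ‖ < 1) :
    F ⊆ (Submodule.span ℝ {cplus} : Submodule ℝ V) := by
  set π := H.projectionOnto _ hcompl.symm
  set A := LinearMap.restrict L hH
  have hLline : ∀ x ∈ Submodule.span ℝ {cplus}, L x ∈ Submodule.span ℝ {cplus} := by
    intro x hx
    obtain ⟨a, rfl⟩ := Submodule.mem_span_singleton.mp hx
    rw [map_smul, hfix]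
    exact Submodule.smul_mem _ _ (Submodule.mem_span_singleton_self _)
  have hπL : ∀ x, π (L x) = A (π x) :=
    Submodule.projectionOnto_apply_of_mapsTo hcompl.symm hH hLline
  have hAK : A '' (π '' F) = π '' F := by
    conv_rhs => rw [← hLF]
    simp only [Set.image_image, hπL]
  have hdecay : Tendsto (fun n => LinearMap.toContinuousLinearMap (A ^ n)) atTop (𝓝 0) :=
    ContinuousLinearMap.tendsto_iff_forall_tendsto_apply.mpr fun u => by
      simpa using Module.End.tendsto_pow_apply_of_forall_baseChange_hasEigenvalue A hspec u
  have hπF : π '' F ⊆ {0} :=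
    subset_zero_of_tendsto_zero_of_subset_image hdecay
      (hFc.image π.continuous_of_finiteDimensional).isBounded fun n => by
        simp [Module.End.coe_pow, Set.image_iterate_eq, Function.iterate_fixed hAK]
  exact fun x hx => (Submodule.projectionOnto_apply_eq_zero_iff hcompl.symm).mp (hπF ⟨x, hx, rfl⟩)

/-- If a nonempty compact set `F` is mapped onto itself by `L`, and
`V = ℝ·c⁺ ⊕ H` with `L c⁺ = c⁺`, `H` invariant, and spectral radius of `L` on `H`
strictly less than `1`, then `F` is contained in the line spanned by `c⁺`. -/
theorem compact_invariant_set_in_fixed_line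
    (V : Type*) [NormedAddCommGroup V] [NormedSpace ℝ V] [FiniteDimensional ℝ V]
    (L : V →ₗ[ℝ] V) (F : Set V) (hFne : F.Nonempty) (hFc : IsCompact F)
    (hLF : L '' F = F)
    (cplus : V) (hfix : L cplus = cplus)
    (H : Submodule ℝ V) (hH : ∀ x ∈ H, L x ∈ H)
    (hcompl : IsCompl (Submodule.span ℝ {cplus}) H)
    (hspec : ∀ μ : ℂ, Module.End.HasEigenvalue
      (LinearMap.baseChange ℂ (LinearMap.restrict L hH)) μ → ‖μ‖ < 1) :
    F ⊆ (Submodule.span ℝ {cplus} : Submodule ℝ V) :=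
  compact_invariant_set_in_fixed_line_general V L F hFc hLF cplus hfix H hH hcompl hspec
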